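/- Fix q ≥ 2 and α ∈ (0, π/2]. For s, t > 0 define h(α,s,t) = (t sin α)^q [ (t² + s² + 2st cos α)^{-q} + (t² + s² - 2st cos α)^{-q} ]. Then for 0 < δ < θ, ∬_{([0,θ]² ∖ [0,δ]²) ∩ {t ≤ s}} [h(α,s,t) + h(α,t,s)] dt ds = ∫_δ^θ s^{1-q} F(α) ds = F(α)·(δ^{2-q} - θ^{2-q})/(q-2) when q > 2, where F(α) = (sin α)^{1-q} [ ∫_{-cot α}^{tan(α/2)} ( (z²+1)^{-q} + ((z sin α + cos α)/(z²+1))^q ) dz + ∫_{cot α}^{cot(α/2)} ( (z²+1)^{-q} + ((z sin α - cos α)/(z²+1))^q ) dz ]. -/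

import Mathlib

open MeasureTheory Set Real

/-- The interaction density of two straight strands crossing at angle `α`,
at arclength distances `s` and `t` from the crossing. -/
noncomputable def hfun (q α s t : ℝ) : ℝ :=
  (t * sin α) ^ q *
    ((t ^ 2 + s ^ 2 + 2 * s * t * cos α) ^ (-q) +
      (t ^ 2 + s ^ 2 - 2 * s * t * cos α) ^ (-q))

/-- The angle function `F(α)` of the renormalized tangent-point energy. -/
noncomputable def Ffun (q α : ℝ) : ℝ :=
  sin α ^ (1 - q) *
    ((∫ z in (-cot α)..(tan (α / 2)),
        ((z ^ 2 + 1) ^ (-q) + ((z * sin α + cos α) / (z ^ 2 + 1)) ^ q)) +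
      (∫ z in (cot α)..(cot (α / 2)),
        ((z ^ 2 + 1) ^ (-q) + ((z * sin α - cos α) / (z ^ 2 + 1)) ^ q)))

/-! Both `hfun q α` and the kernel `hfun q α s t + hfun q α t s` are homogeneous of degree `-q`,
so the inner integral over `0 ≤ t ≤ s` equals `s ^ (1 - q)` times the same integral over
`0 ≤ u ≤ 1` at `s = 1`. The substitutions `z = (u ∓ cos α) / sin α` turn the two integrals
defining `F(α)` into exactly this integral over `[0, 1]`. Fubini over the region
`{δ < s ≤ θ, 0 ≤ t ≤ s}` then gives the first identity, and integrating `s ^ (1 - q)` the second. -/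

lemma tan_half_eq_one_sub_cos_div_sin {α : ℝ} (h : sin α ≠ 0) :
    tan (α / 2) = (1 - cos α) / sin α := by
  obtain ⟨x, rfl⟩ : ∃ x, α = 2 * x := ⟨α / 2, by ring⟩
  rw [sin_two_mul] at h ⊢
  have hs : sin x ≠ 0 := fun h0 => h (by simp [h0])
  have hc : cos x ≠ 0 := fun h0 => h (by simp [h0])
  rw [mul_div_cancel_left₀ x two_ne_zero, tan_eq_sin_div_cos, cos_two_mul, cos_sq']
  field_simp
  ring

lemma cot_half_eq_one_add_cos_div_sin {α : ℝ} (h : sin α ≠ 0) :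
    cot (α / 2) = (1 + cos α) / sin α := by
  obtain ⟨x, rfl⟩ : ∃ x, α = 2 * x := ⟨α / 2, by ring⟩
  rw [sin_two_mul] at h ⊢
  have hs : sin x ≠ 0 := fun h0 => h (by simp [h0])
  have hc : cos x ≠ 0 := fun h0 => h (by simp [h0])
  rw [mul_div_cancel_left₀ x two_ne_zero, cot_eq_cos_div_sin, cos_two_mul]
  field_simp
  ring

lemma abs_cos_lt_one_of_sin_ne_zero {α : ℝ} (h : sin α ≠ 0) : |cos α| < 1 :=
  (sq_lt_one_iff_abs_lt_one _).1 (by nlinarith [sin_sq_add_cos_sq α, sq_pos_of_ne_zero h])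

lemma sq_add_sq_add_two_mul_mul_nonneg {c s t : ℝ} (hc : |c| ≤ 1) :
    0 ≤ t ^ 2 + s ^ 2 + 2 * s * t * c := by
  have : c ^ 2 ≤ 1 := (sq_le_one_iff_abs_le_one c).2 hc
  nlinarith [sq_nonneg (t + s * c), mul_nonneg (sq_nonneg s) (sub_nonneg.2 this)]

lemma sq_add_sq_add_two_mul_mul_pos {c s t : ℝ} (hc : |c| < 1) (h : s ≠ 0 ∨ t ≠ 0) :
    0 < t ^ 2 + s ^ 2 + 2 * s * t * c := by
  have : c ^ 2 < 1 := (sq_lt_one_iff_abs_lt_one c).2 hc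
  rcases eq_or_ne s 0 with rfl | hs
  · nlinarith [sq_pos_of_ne_zero (h.resolve_left (not_not.2 rfl))]
  · nlinarith [sq_nonneg (t + s * c), mul_pos (pow_pos (abs_pos.2 hs) 2) (sub_pos.2 this), sq_abs s]

lemma hfun_mul_mul {q α s a b : ℝ} (hα : 0 ≤ sin α) (hs : 0 < s) (hb : 0 ≤ b) :
    hfun q α (s * a) (s * b) = s ^ (-q) * hfun q α a b := by
  have scale : ∀ X, 0 ≤ X → (s ^ 2 * X) ^ (-q) = s ^ (-(2 * q)) * X ^ (-q) := fun X hX => by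
    rw [mul_rpow (sq_nonneg s) hX, ← rpow_natCast, ← rpow_mul hs.le]
    push_cast; ring_nf
  have hcos : |cos α| ≤ 1 := abs_cos_le_one α
  have hcos' : |-cos α| ≤ 1 := by rwa [abs_neg]
  have hplus := sq_add_sq_add_two_mul_mul_nonneg (s := a) (t := b) hcos
  have hminus := sq_add_sq_add_two_mul_mul_nonneg (s := a) (t := b) hcos'
  unfold hfun
  rw [show (s * b) ^ 2 + (s * a) ^ 2 + 2 * (s * a) * (s * b) * cos α
      = s ^ 2 * (b ^ 2 + a ^ 2 + 2 * a * b * cos α) by ring,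
    show (s * b) ^ 2 + (s * a) ^ 2 - 2 * (s * a) * (s * b) * cos α
      = s ^ 2 * (b ^ 2 + a ^ 2 + 2 * a * b * -cos α) by ring,
    scale _ hplus, scale _ hminus, mul_assoc, mul_rpow hs.le (mul_nonneg hb hα),
    show b ^ 2 + a ^ 2 + 2 * a * b * -cos α = b ^ 2 + a ^ 2 - 2 * a * b * cos α by ring]
  have : s ^ q * s ^ (-(2 * q)) = s ^ (-q) := by rw [← rpow_add hs]; ring_nf
  rw [← this]
  ring

lemma integral_hfun_add_hfun_swap {q α s : ℝ} (hα : 0 ≤ sin α) (hs : 0 < s) :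
    ∫ t in (0:ℝ)..s, (hfun q α s t + hfun q α t s) =
      s ^ (1 - q) * ∫ u in (0:ℝ)..1, (hfun q α 1 u + hfun q α u 1) := by
  have hcomp := intervalIntegral.integral_comp_mul_left
    (fun t => hfun q α s t + hfun q α t s) hs.ne' (a := 0) (b := 1)
  rw [mul_zero, mul_one] at hcomp
  have homog : EqOn (fun u => hfun q α s (s * u) + hfun q α (s * u) s)
      (fun u => s ^ (-q) * (hfun q α 1 u + hfun q α u 1)) (uIcc 0 1) := fun u hu => by
    have hu : 0 ≤ u := by rw [uIcc_of_le zero_le_one] at hu; exact hu.1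
    simpa [mul_add] using congrArg₂ (· + ·) (hfun_mul_mul (q := q) (a := 1) hα hs hu)
      (hfun_mul_mul (q := q) (a := u) (b := 1) hα hs zero_le_one)
  have unscale : ∫ t in (0:ℝ)..s, (hfun q α s t + hfun q α t s) =
      s * ∫ u in (0:ℝ)..1, (hfun q α s (s * u) + hfun q α (s * u) s) := by
    rw [hcomp, smul_eq_mul, mul_inv_cancel_left₀ hs.ne']
  rw [unscale, intervalIntegral.integral_congr homog, intervalIntegral.integral_const_mul,
    ← mul_assoc, sub_eq_add_neg, rpow_add hs, rpow_one]

lemma integral_rpow_sq_add_one_subst {q c σ : ℝ} (hσ : 0 < σ) (hcσ : c ^ 2 + σ ^ 2 = 1) :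
    ∫ z in (-c / σ)..((1 - c) / σ), ((z ^ 2 + 1) ^ (-q) + ((z * σ + c) / (z ^ 2 + 1)) ^ q) =
      σ ^ (2 * q - 1) * ∫ u in (0:ℝ)..1, (u ^ q + 1) * (u ^ 2 + 1 - 2 * u * c) ^ (-q) := by
  have hcomp := intervalIntegral.integral_comp_div_sub
    (fun z => (z ^ 2 + 1) ^ (-q) + ((z * σ + c) / (z ^ 2 + 1)) ^ q) hσ.ne' (c / σ) (a := 0) (b := 1)
  rw [zero_div, zero_sub, ← neg_div, div_sub_div_same] at hcomp
  have subst : EqOn (fun u => (((u / σ - c / σ) ^ 2 + 1) ^ (-q) +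
        (((u / σ - c / σ) * σ + c) / ((u / σ - c / σ) ^ 2 + 1)) ^ q))
      (fun u => σ ^ (2 * q) * ((u ^ q + 1) * (u ^ 2 + 1 - 2 * u * c) ^ (-q))) (uIcc 0 1) := by
    intro u hu
    have hu : 0 ≤ u := by rw [uIcc_of_le zero_le_one] at hu; exact hu.1
    have hX : 0 < u ^ 2 + 1 - 2 * u * c := by nlinarith [sq_nonneg (u - c)]
    have hsq : (u / σ - c / σ) ^ 2 + 1 = (u ^ 2 + 1 - 2 * u * c) / σ ^ 2 := by
      field_simp; linear_combination hcσ
    have hlin : (u / σ - c / σ) * σ + c = u := by field_simp; ring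
    have hσq : (σ ^ 2) ^ q = σ ^ (2 * q) := by
      rw [← rpow_natCast, ← rpow_mul hσ.le]; norm_num
    simp only [hsq, hlin, div_div_eq_mul_div]
    rw [div_rpow hX.le (sq_nonneg σ), div_rpow (mul_nonneg hu (sq_nonneg σ)) hX.le,
      mul_rpow hu (sq_nonneg σ), rpow_neg hX.le, rpow_neg (sq_nonneg σ), hσq]
    field_simp
    ring
  rw [intervalIntegral.integral_congr subst, intervalIntegral.integral_const_mul,
    smul_eq_mul] at hcomp
  rw [rpow_sub_one hσ.ne', div_mul_eq_mul_div, hcomp, mul_div_cancel_left₀ _ hσ.ne']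

lemma Ffun_eq_integral_hfun_add_hfun_swap {q α : ℝ} (hq : 0 ≤ q) (hα : 0 < sin α) :
    Ffun q α = ∫ u in (0:ℝ)..1, (hfun q α 1 u + hfun q α u 1) := by
  have hcσ : cos α ^ 2 + sin α ^ 2 = 1 := cos_sq_add_sin_sq α
  have hplus := integral_rpow_sq_add_one_subst (q := q) hα hcσ
  have hminus := integral_rpow_sq_add_one_subst (q := q) (c := -cos α) hα (by rwa [neg_sq])
  simp only [neg_neg, sub_neg_eq_add, mul_neg, ← sub_eq_add_neg] at hminus
  have hcos := abs_cos_lt_one_of_sin_ne_zero hα.ne'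
  have hint : ∀ c, |c| < 1 → IntervalIntegrable
      (fun u : ℝ => (u ^ q + 1) * (u ^ 2 + 1 - 2 * u * c) ^ (-q)) volume 0 1 := by
    intro c hc
    have hc2 : c ^ 2 < 1 := (sq_lt_one_iff_abs_lt_one c).2 hc
    refine Continuous.intervalIntegrable ?_ 0 1
    exact ((continuous_id.rpow_const fun _ => Or.inr hq).add continuous_const).mul
      ((by fun_prop : Continuous fun u : ℝ => u ^ 2 + 1 - 2 * u * c).rpow_const
        fun u => Or.inl (by nlinarith [sq_nonneg (u - c)]))
  have hint_plus : IntervalIntegrable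
      (fun u : ℝ => (u ^ q + 1) * (u ^ 2 + 1 + 2 * u * cos α) ^ (-q)) volume 0 1 := by
    simpa only [mul_neg, sub_neg_eq_add] using hint (-cos α) (by rwa [abs_neg])
  have pointwise : ∀ u ∈ uIcc (0:ℝ) 1, hfun q α 1 u + hfun q α u 1 =
      sin α ^ q * ((u ^ q + 1) * (u ^ 2 + 1 - 2 * u * cos α) ^ (-q) +
        (u ^ q + 1) * (u ^ 2 + 1 + 2 * u * cos α) ^ (-q)) := by
    intro u hu
    have hu : 0 ≤ u := by rw [uIcc_of_le zero_le_one] at hu; exact hu.1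
    simp only [hfun, one_mul, mul_rpow hu hα.le]
    ring_nf
  rw [Ffun, cot_eq_cos_div_sin, tan_half_eq_one_sub_cos_div_sin hα.ne',
    cot_half_eq_one_add_cos_div_sin hα.ne', ← neg_div, hplus, hminus,
    intervalIntegral.integral_congr pointwise, intervalIntegral.integral_const_mul,
    intervalIntegral.integral_add (hint _ hcos) hint_plus]
  have hpow : sin α ^ (1 - q) * sin α ^ (2 * q - 1) = sin α ^ q := by
    rw [← rpow_add hα]; ring_nf
  rw [← hpow]
  ring

lemma continuousOn_hfun {q α : ℝ} (hq : 0 ≤ q) (hα : |cos α| < 1) :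
    ContinuousOn (fun p : ℝ × ℝ => hfun q α p.1 p.2) {0}ᶜ := by
  have hα' : |-cos α| < 1 := by rwa [abs_neg]
  have hp : ∀ p ∈ ({0}ᶜ : Set (ℝ × ℝ)), p.1 ≠ 0 ∨ p.2 ≠ 0 := fun p hp => by
    by_contra! h
    exact hp (Prod.ext h.1 h.2)
  unfold hfun
  refine ((continuous_snd.mul continuous_const).rpow_const fun _ => Or.inr hq).continuousOn.mul
    (ContinuousOn.add ?_ ?_) <;> refine ContinuousOn.rpow_const (by fun_prop) fun p hp' => Or.inl ?_
  · exact (sq_add_sq_add_two_mul_mul_pos hα (hp p hp')).ne'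
  · have := sq_add_sq_add_two_mul_mul_pos hα' (hp p hp')
    rw [mul_neg, ← sub_eq_add_neg] at this
    exact this.ne'

lemma continuousOn_hfun_add_hfun_swap {q α : ℝ} (hq : 0 ≤ q) (hα : |cos α| < 1) :
    ContinuousOn (fun p : ℝ × ℝ => hfun q α p.1 p.2 + hfun q α p.2 p.1) {0}ᶜ :=
  have h := continuousOn_hfun hq hα
  h.add (h.comp continuous_swap.continuousOn
    fun p hp hswap => hp (by rw [← Prod.swap_swap p, hswap]; rfl))

lemma setIntegral_annulus_inter_le {f : ℝ × ℝ → ℝ} {δ θ : ℝ} (hδ : 0 ≤ δ) (hδθ : δ ≤ θ)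
    (hf : IntegrableOn f (Icc δ θ ×ˢ Icc 0 θ)) :
    ∫ p in (Icc 0 θ ×ˢ Icc 0 θ \ Icc 0 δ ×ˢ Icc 0 δ) ∩ {p | p.2 ≤ p.1}, f p =
      ∫ s in δ..θ, ∫ t in (0:ℝ)..s, f (s, t) := by
  have hB : MeasurableSet {p : ℝ × ℝ | p.2 ≤ p.1} := measurableSet_le measurable_snd measurable_fst
  have hregion : (Icc 0 θ ×ˢ Icc 0 θ \ Icc 0 δ ×ˢ Icc 0 δ) ∩ {p : ℝ × ℝ | p.2 ≤ p.1} =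
      (Ioc δ θ ×ˢ Icc 0 θ) ∩ {p | p.2 ≤ p.1} := by
    ext ⟨x, y⟩
    simp only [mem_inter_iff, mem_sdiff, mem_prod, mem_Icc, mem_Ioc, mem_ofPred_eq]
    constructor
    · rintro ⟨⟨⟨⟨hx0, hxθ⟩, hy0, hyθ⟩, hn⟩, hyx⟩
      exact ⟨⟨⟨lt_of_not_ge fun hxδ => hn ⟨⟨hx0, hxδ⟩, hy0, hyx.trans hxδ⟩, hxθ⟩, hy0, hyθ⟩, hyx⟩
    · rintro ⟨⟨⟨hδx, hxθ⟩, hy0, hyθ⟩, hyx⟩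
      exact ⟨⟨⟨⟨hδ.trans hδx.le, hxθ⟩, hy0, hyθ⟩, fun h => h.1.2.not_gt hδx⟩, hyx⟩
  have hint : IntegrableOn ({p : ℝ × ℝ | p.2 ≤ p.1}.indicator f) (Ioc δ θ ×ˢ Icc 0 θ) :=
    (hf.mono_set (prod_mono Ioc_subset_Icc_self subset_rfl)).indicator hB
  have hslice : ∀ x ∈ Ioc δ θ,
      ∫ y in Icc 0 θ, {p : ℝ × ℝ | p.2 ≤ p.1}.indicator f (x, y) = ∫ t in (0:ℝ)..x, f (x, t) := by
    intro x hx
    have hfiber : (fun y => {p : ℝ × ℝ | p.2 ≤ p.1}.indicator f (x, y)) =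
        (Iic x).indicator (fun y => f (x, y)) := by
      ext y
      by_cases h : y ≤ x <;> simp [h]
    have hIcc : Icc 0 θ ∩ Iic x = Icc 0 x := by
      rw [← Ici_inter_Iic, ← Ici_inter_Iic, inter_assoc, Iic_inter_Iic, inf_eq_right.2 hx.2]
    rw [hfiber, setIntegral_indicator measurableSet_Iic, hIcc, integral_Icc_eq_integral_Ioc,
      ← intervalIntegral.integral_of_le (hδ.trans hx.1.le)]
  rw [hregion, ← setIntegral_indicator hB, Measure.volume_eq_prod, setIntegral_prod _ hint,
    setIntegral_congr_fun measurableSet_Ioc hslice, intervalIntegral.integral_of_le hδθ]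

theorem stmt8 (q α δ θ : ℝ) (hq : 2 < q) (hα : α ∈ Ioc 0 (π / 2))
    (hδ : 0 < δ) (hδθ : δ < θ) :
    (∫ p in ((Icc (0:ℝ) θ ×ˢ Icc (0:ℝ) θ \ Icc (0:ℝ) δ ×ˢ Icc (0:ℝ) δ) ∩
        {p : ℝ × ℝ | p.2 ≤ p.1}), (hfun q α p.1 p.2 + hfun q α p.2 p.1)) =
      (∫ s in δ..θ, s ^ (1 - q) * Ffun q α) ∧
    (∫ p in ((Icc (0:ℝ) θ ×ˢ Icc (0:ℝ) θ \ Icc (0:ℝ) δ ×ˢ Icc (0:ℝ) δ) ∩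
        {p : ℝ × ℝ | p.2 ≤ p.1}), (hfun q α p.1 p.2 + hfun q α p.2 p.1)) =
      Ffun q α * (δ ^ (2 - q) - θ ^ (2 - q)) / (q - 2) := by
  have hsin : 0 < sin α := sin_pos_of_pos_of_lt_pi hα.1 (by linarith [hα.2, pi_pos])
  have hint : IntegrableOn (fun p : ℝ × ℝ => hfun q α p.1 p.2 + hfun q α p.2 p.1)
      (Icc δ θ ×ˢ Icc 0 θ) :=
    ((continuousOn_hfun_add_hfun_swap (by linarith) (abs_cos_lt_one_of_sin_ne_zero hsin.ne')).mono
      fun p hp h => (hδ.trans_le hp.1.1).ne' (congrArg Prod.fst h)).integrableOn_compact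
        (isCompact_Icc.prod isCompact_Icc)
  have hiter : (∫ p in ((Icc (0:ℝ) θ ×ˢ Icc (0:ℝ) θ \ Icc (0:ℝ) δ ×ˢ Icc (0:ℝ) δ) ∩
        {p : ℝ × ℝ | p.2 ≤ p.1}), (hfun q α p.1 p.2 + hfun q α p.2 p.1)) =
      ∫ s in δ..θ, s ^ (1 - q) * Ffun q α := by
    rw [setIntegral_annulus_inter_le hδ.le hδθ.le hint,
      Ffun_eq_integral_hfun_add_hfun_swap (by linarith) hsin]
    refine intervalIntegral.integral_congr fun s hs => ?_
    rw [uIcc_of_le hδθ.le] at hs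
    exact integral_hfun_add_hfun_swap hsin.le (hδ.trans_le hs.1)
  refine ⟨hiter, hiter.trans ?_⟩
  have hq2 : q - 2 ≠ 0 := by linarith
  have h2q : 2 - q ≠ 0 := by linarith
  rw [intervalIntegral.integral_mul_const, integral_rpow (Or.inr ⟨by linarith, ?_⟩)]
  · rw [show 1 - q + 1 = 2 - q by ring]
    field_simp
    ring
  · rw [uIcc_of_le hδθ.le]
    exact fun h => hδ.not_ge h.1
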